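/- arXiv:2004.09407 — 3 statements merged into one kernel-verified Lean document; each statement's English description precedes it below -/
import Mathlib

section
/- Let n ≥ 1 and let A be a (2n+1)×(2n+1) real matrix whose first 2n rows are linearly independent. Then there exist an orthogonal matrix R ∈ O(2n+1), a row vector g ∈ ℝ^{2n}, an invertible 2n×2n real matrix Ã, and ρ ∈ ℝ such that U(g)·A·R is the block matrix [[Ã, 0],[0, ρ]] (blocks of sizes 2n and 1), where U(g) denotes the block matrix [[I_{2n}, 0],[g, 1]]. -/
/-!
The `2n` top rows of `A` span a proper subspace of `ℝ^(2n+1)`, so some unit vector `e` is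
orthogonal to all of them. For an orthogonal `R` whose last column is `e` (a reflection carrying
the last standard basis vector to `e`), the top-right block of `A * R` vanishes; its top-left block
is then invertible, because the top rows of `A * R` are still linearly independent, and one step of
block Gaussian elimination by `U(g)` clears the bottom-left block.
-/

open Matrix

namespace Matrix

section Orthogonal

variable {ι m : Type*} [Fintype ι] [Fintype m]

theorem exists_orthogonal_col_eq [DecidableEq ι] (e : EuclideanSpace ℝ ι) (he : ‖e‖ = 1)
    (k : ι) : ∃ R : Matrix ι ι ℝ, Rᵀ * R = 1 ∧ ∀ j, R j k = e j := by
  let b := EuclideanSpace.basisFun ι ℝ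
  let f := Submodule.reflection (ℝ ∙ (b k - e))ᗮ
  have hf : f (b k) = e := Submodule.reflection_sub (by simp [b, he])
  refine ⟨b.toBasis.toMatrix (b.map f), ?_, fun j => ?_⟩
  · simpa using b.toMatrix_orthonormalBasis_conjTranspose_mul_self (b.map f)
  · rw [← hf]
    simp [Module.Basis.toMatrix_apply, OrthonormalBasis.map_apply, b]

theorem exists_ne_zero_forall_dotProduct_eq_zero {K : Type*} [Field K] (r : m → ι → K)
    (h : Fintype.card m < Fintype.card ι) : ∃ v ≠ 0, ∀ i, r i ⬝ᵥ v = 0 := by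
  obtain ⟨v, hv, hv0⟩ := Submodule.exists_mem_ne_zero_of_ne_bot
    (LinearMap.ker_ne_bot_of_finrank_lt (f := (of r).mulVecLin) (by simpa using h))
  exact ⟨v, hv0, fun i => congrFun (LinearMap.mem_ker.mp hv) i⟩

theorem exists_orthogonal_vecMul_apply_eq_zero [DecidableEq ι] (r : m → ι → ℝ)
    (h : Fintype.card m < Fintype.card ι) (k : ι) :
    ∃ R : Matrix ι ι ℝ, Rᵀ * R = 1 ∧ ∀ i, (r i ᵥ* R) k = 0 := by
  obtain ⟨v, hv0, hv⟩ := exists_ne_zero_forall_dotProduct_eq_zero r h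
  let e : EuclideanSpace ℝ ι := ‖WithLp.toLp 2 v‖⁻¹ • WithLp.toLp 2 v
  have he : ‖e‖ = 1 := norm_smul_inv_norm (by simpa using hv0)
  obtain ⟨R, hR, hRe⟩ := exists_orthogonal_col_eq e he k
  refine ⟨R, hR, fun i => ?_⟩
  have hcol : (fun j => R j k) = ‖WithLp.toLp 2 v‖⁻¹ • v := funext hRe
  rw [vecMul, hcol, dotProduct_smul, hv, smul_zero]

end Orthogonal

variable {K m n o p : Type*} [Field K]

theorem linearIndependent_vecMul_of_isUnit [Fintype n] [DecidableEq n] {v : m → n → K}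
    (hv : LinearIndependent K v) {R : Matrix n n K} (hR : IsUnit R) :
    LinearIndependent K fun i => v i ᵥ* R :=
  hv.map' R.vecMulLinear (LinearMap.ker_eq_bot.mpr (vecMul_injective_iff_isUnit.mpr hR))

theorem linearIndependent_toBlocks₁₁_rows {M : Matrix (m ⊕ o) (n ⊕ p) K}
    (h₁₂ : M.toBlocks₁₂ = 0) (hM : LinearIndependent K fun i => M (Sum.inl i)) :
    LinearIndependent K fun i => M.toBlocks₁₁ i := by
  let extendByZero : (n → K) →ₗ[K] (n ⊕ p → K) :=
    (LinearEquiv.sumArrowLequivProdArrow n p K K).symm.toLinearMap ∘ₗ LinearMap.inl K _ _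
  refine LinearIndependent.of_comp extendByZero ?_
  convert hM using 1
  ext i (j | j)
  · rfl
  · exact (congrFun (congrFun h₁₂ i) j).symm

theorem exists_fromBlocks_mul_fromBlocks_zero₁₂_eq {α : Type*} [CommRing α]
    [Fintype m] [DecidableEq m] [Fintype o] [DecidableEq o]
    {P : Matrix m m α} (hP : IsUnit P) (C : Matrix o m α) (D : Matrix o o α) :
    ∃ G : Matrix o m α, fromBlocks 1 0 G 1 * fromBlocks P 0 C D = fromBlocks P 0 0 D := by
  refine ⟨-(C * P⁻¹), ?_⟩
  rw [fromBlocks_multiply, Matrix.neg_mul, Matrix.mul_assoc,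
    nonsing_inv_mul P ((isUnit_iff_isUnit_det P).mp hP)]
  simp

end Matrix

theorem weak_canonical_form_exists_general (n : ℕ)
    (A : Matrix (Fin (2 * n) ⊕ Fin 1) (Fin (2 * n) ⊕ Fin 1) ℝ)
    (hA : LinearIndependent ℝ (fun i : Fin (2 * n) => A (Sum.inl i))) :
    ∃ (R : Matrix (Fin (2 * n) ⊕ Fin 1) (Fin (2 * n) ⊕ Fin 1) ℝ)
      (g : Fin (2 * n) → ℝ)
      (Atilde : Matrix (Fin (2 * n)) (Fin (2 * n)) ℝ) (ρ : ℝ),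
      Rᵀ * R = 1 ∧ IsUnit Atilde ∧
      (Matrix.fromBlocks 1 0 (Matrix.of fun (_ : Fin 1) j => g j) 1) * A * R
        = Matrix.fromBlocks Atilde 0 0 (Matrix.of fun _ _ => ρ) := by
  obtain ⟨R, hR, hAR⟩ := exists_orthogonal_vecMul_apply_eq_zero
    (fun i : Fin (2 * n) => A (Sum.inl i)) (by simp) (Sum.inr 0)
  have hRunit : IsUnit R := (isUnit_iff_isUnit_det R).mpr (isUnit_det_of_left_inverse hR)
  have hrows : ∀ i, (A * R) (Sum.inl i) = A (Sum.inl i) ᵥ* R :=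
    fun i => mul_apply_eq_vecMul A R _
  have h₁₂ : (A * R).toBlocks₁₂ = 0 := by
    ext i j
    rw [Fin.fin_one_eq_zero j]
    exact (congrFun (hrows i) _).trans (hAR i)
  have hP : IsUnit (A * R).toBlocks₁₁ := linearIndependent_rows_iff_isUnit.mp <|
    linearIndependent_toBlocks₁₁_rows h₁₂ <| by
      simpa only [hrows] using linearIndependent_vecMul_of_isUnit hA hRunit
  obtain ⟨G, hG⟩ :=
    exists_fromBlocks_mul_fromBlocks_zero₁₂_eq hP (A * R).toBlocks₂₁ (A * R).toBlocks₂₂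
  refine ⟨R, G 0, (A * R).toBlocks₁₁, (A * R).toBlocks₂₂ 0 0, hR, hP, ?_⟩
  have hG₀ : Matrix.of (fun (_ : Fin 1) j => G 0 j) = G := by
    ext i j
    fin_cases i
    rfl
  have hD₀ : Matrix.of (fun _ _ => (A * R).toBlocks₂₂ 0 0) = (A * R).toBlocks₂₂ := by
    ext i j
    fin_cases i; fin_cases j
    rfl
  rw [hG₀, hD₀, Matrix.mul_assoc, ← hG]
  conv_lhs => rw [← fromBlocks_toBlocks (A * R), h₁₂]

/-- Existence part of the weak canonical form (Lemma 3.1):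
for a `(2n+1)×(2n+1)` real matrix `A` whose first `2n` rows are linearly independent,
there exist an orthogonal `R`, a row vector `g`, an invertible `Atilde` and `ρ ∈ ℝ` with
`U(g) * A * R = [[Atilde, 0], [0, ρ]]`, where `U(g) = [[1, 0], [g, 1]]`. -/
theorem weak_canonical_form_exists (n : ℕ) (hn : 1 ≤ n)
    (A : Matrix (Fin (2 * n) ⊕ Fin 1) (Fin (2 * n) ⊕ Fin 1) ℝ)
    (hA : LinearIndependent ℝ (fun i : Fin (2 * n) => A (Sum.inl i))) :
    ∃ (R : Matrix (Fin (2 * n) ⊕ Fin 1) (Fin (2 * n) ⊕ Fin 1) ℝ)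
      (g : Fin (2 * n) → ℝ)
      (Atilde : Matrix (Fin (2 * n)) (Fin (2 * n)) ℝ) (ρ : ℝ),
      Rᵀ * R = 1 ∧ IsUnit Atilde ∧
      (Matrix.fromBlocks 1 0 (Matrix.of fun (_ : Fin 1) j => g j) 1) * A * R
        = Matrix.fromBlocks Atilde 0 0 (Matrix.of fun _ _ => ρ) :=
  weak_canonical_form_exists_general n A hA
end

section
/- Let n ≥ 1 and let A be a (2n+1)×(2n+1) real matrix whose first 2n rows are linearly independent. Suppose R, R' ∈ O(2n+1), g, g' ∈ ℝ^{2n}, invertible 2n×2n matrices Ã, Ã', and ρ, ρ' ∈ ℝ satisfy U(g)·A·R = [[Ã,0],[0,ρ]] and U(g')·A·R' = [[Ã',0],[0,ρ']] (block sizes 2n and 1). Then g = g', and there exist an orthogonal matrix R̃ ∈ O(2n) and a sign ε ∈ {1,−1} such that ᵗR·R' = [[R̃,0],[0,ε]], Ã' = Ã·R̃, and ρ' = ε·ρ; in particular |ρ'| = |ρ|. -/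
/-!
Eliminating `A` between the two normal forms gives `U(g' - g) * diag(Ã, ρ) * S = diag(Ã', ρ')`
with `S = Rᵀ * R'` orthogonal. The upper-right block of this equation reads `Ã * S₁₂ = 0`, so
`S₁₂ = 0` as `Ã` is invertible. An orthogonal matrix with a vanishing off-diagonal block is
block diagonal, so `S₂₁ = 0` too, and then the lower-left block `(g' - g) * Ã * S₁₁ = 0`
forces `g = g'`, while the diagonal blocks give `Ã' = Ã * S₁₁` and `ρ' = ρ * S₂₂` with
`S₂₂ = ±1`.
-/

open Matrix

namespace Matrix

section

variable {m n α : Type*} [Fintype m] [Fintype n] [DecidableEq m] [DecidableEq n] [CommRing α]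

theorem fromBlocks_one_zero_mul_fromBlocks_one_zero (C D : Matrix n m α) :
    fromBlocks 1 0 C 1 * fromBlocks 1 0 D 1 =
      (fromBlocks 1 0 (C + D) 1 : Matrix (m ⊕ n) (m ⊕ n) α) := by
  simp [fromBlocks_multiply, add_comm]

theorem eq_zero_of_isUnit_mul_eq_zero {l : Type*} {D : Matrix m m α} {X : Matrix m l α}
    (hD : IsUnit D) (h : D * X = 0) : X = 0 := by
  rw [← nonsing_inv_mul_cancel_left D X ((isUnit_iff_isUnit_det D).mp hD), h, Matrix.mul_zero]

theorem eq_zero_of_mul_isUnit_eq_zero {l : Type*} {D : Matrix m m α} {X : Matrix l m α}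
    (hD : IsUnit D) (h : X * D = 0) : X = 0 := by
  rw [← mul_nonsing_inv_cancel_right D X ((isUnit_iff_isUnit_det D).mp hD), h, Matrix.zero_mul]

theorem fromBlocks_zero₁₂_mul_transpose_eq_one_iff {P : Matrix m m α} {K : Matrix n m α}
    {Q : Matrix n n α} :
    fromBlocks P 0 K Q * (fromBlocks P 0 K Q)ᵀ = 1 ↔ K = 0 ∧ P * Pᵀ = 1 ∧ Q * Qᵀ = 1 := by
  rw [fromBlocks_transpose, fromBlocks_multiply, ← fromBlocks_one, fromBlocks_inj]
  simp only [transpose_zero, Matrix.mul_zero, add_zero, Matrix.zero_mul]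
  constructor
  · rintro ⟨hP, hPK, -, hKQ⟩
    have hKt : Kᵀ = 0 := by
      rw [← Matrix.one_mul Kᵀ, ← mul_eq_one_comm.mp hP, Matrix.mul_assoc, hPK, Matrix.mul_zero]
    obtain rfl : K = 0 := by simpa using congrArg transpose hKt
    exact ⟨rfl, hP, by simpa using hKQ⟩
  · rintro ⟨rfl, hP, hQ⟩
    simp [hP, hQ]

theorem fromBlocks_one_zero_mul_mul_eq_of_mul_eq {A T R R' B B' : Matrix (m ⊕ n) (m ⊕ n) α}
    {C C' : Matrix n m α} (hR : R * T = 1) (h : fromBlocks 1 0 C 1 * A * R = B)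
    (h' : fromBlocks 1 0 C' 1 * A * R' = B') :
    fromBlocks 1 0 (C' - C) 1 * B * (T * R') = B' := by
  have hA : fromBlocks 1 0 (-C) 1 * B * T = A := by
    rw [← h, Matrix.mul_assoc _ A R, ← Matrix.mul_assoc, ← Matrix.mul_assoc,
      fromBlocks_one_zero_mul_fromBlocks_one_zero, neg_add_cancel,
      fromBlocks_one, Matrix.one_mul, Matrix.mul_assoc, hR, Matrix.mul_one]
  rw [← h', ← hA, sub_eq_add_neg, ← fromBlocks_one_zero_mul_fromBlocks_one_zero]
  simp only [Matrix.mul_assoc]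

theorem eq_zero_of_fromBlocks_one_zero_mul_fromBlocks_mul_eq_fromBlocks {C : Matrix n m α}
    {D D' : Matrix m m α} {E E' : Matrix n n α} {P : Matrix m m α} {L : Matrix m n α}
    {K : Matrix n m α} {Q : Matrix n n α} (hD : IsUnit D)
    (hS : fromBlocks P L K Q * (fromBlocks P L K Q)ᵀ = 1)
    (h : fromBlocks 1 0 C 1 * fromBlocks D 0 0 E * fromBlocks P L K Q = fromBlocks D' 0 0 E') :
    C = 0 ∧ L = 0 ∧ K = 0 ∧ P * Pᵀ = 1 ∧ Q * Qᵀ = 1 ∧ D' = D * P ∧ E' = E * Q := by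
  simp only [fromBlocks_multiply, fromBlocks_inj, Matrix.one_mul, Matrix.zero_mul,
    Matrix.mul_zero, add_zero, zero_add] at h
  obtain ⟨hDP, hDL, hCK, hCQ⟩ := h
  obtain rfl : L = 0 := eq_zero_of_isUnit_mul_eq_zero hD hDL
  obtain ⟨rfl, hP, hQ⟩ := fromBlocks_zero₁₂_mul_transpose_eq_one_iff.mp hS
  have hDP_unit : IsUnit (D * P) :=
    hD.mul ((isUnit_iff_isUnit_det P).mpr (isUnit_det_of_right_inverse hP))
  refine ⟨eq_zero_of_mul_isUnit_eq_zero hDP_unit ?_, rfl, rfl, hP, hQ, hDP.symm, ?_⟩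
  · simpa [Matrix.mul_assoc] using hCK
  · simpa using hCQ.symm

end

section Unique

variable {o α : Type*} [Fintype o] [Unique o] [CommRing α]

theorem of_const_mul_of_const (a b : α) :
    (of fun _ _ => a : Matrix o o α) * of (fun _ _ => b) = of fun _ _ => a * b := by
  ext i j
  simp [mul_apply]

theorem exists_eq_of_const_of_mul_transpose_eq_one [DecidableEq o] [NoZeroDivisors α]
    {Q : Matrix o o α} (hQ : Q * Qᵀ = 1) : ∃ ε : α, (ε = 1 ∨ ε = -1) ∧ Q = of fun _ _ => ε := by
  refine ⟨Q default default, mul_self_eq_one_iff.mp ?_, ?_⟩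
  · simpa [mul_apply] using congrFun (congrFun hQ default) default
  · ext i j
    simp [Subsingleton.elim i default, Subsingleton.elim j default]

end Unique

end Matrix

theorem weak_canonical_form_unique_general (n : ℕ)
    (A : Matrix (Fin (2 * n) ⊕ Fin 1) (Fin (2 * n) ⊕ Fin 1) ℝ)
    (R R' : Matrix (Fin (2 * n) ⊕ Fin 1) (Fin (2 * n) ⊕ Fin 1) ℝ)
    (hR : Rᵀ * R = 1) (hR' : R'ᵀ * R' = 1)
    (g g' : Fin (2 * n) → ℝ)
    (Atilde Atilde' : Matrix (Fin (2 * n)) (Fin (2 * n)) ℝ)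
    (hAtilde : IsUnit Atilde)
    (ρ ρ' : ℝ)
    (heq : (Matrix.fromBlocks 1 0 (Matrix.of fun (_ : Fin 1) j => g j) 1) * A * R
        = Matrix.fromBlocks Atilde 0 0 (Matrix.of fun _ _ => ρ))
    (heq' : (Matrix.fromBlocks 1 0 (Matrix.of fun (_ : Fin 1) j => g' j) 1) * A * R'
        = Matrix.fromBlocks Atilde' 0 0 (Matrix.of fun _ _ => ρ')) :
    g = g' ∧
    ∃ (Rtilde : Matrix (Fin (2 * n)) (Fin (2 * n)) ℝ) (ε : ℝ),
      Rtildeᵀ * Rtilde = 1 ∧ (ε = 1 ∨ ε = -1) ∧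
      Rᵀ * R' = Matrix.fromBlocks Rtilde 0 0 (Matrix.of fun _ _ => ε) ∧
      Atilde' = Atilde * Rtilde ∧ ρ' = ε * ρ ∧ |ρ'| = |ρ| := by
  have hUBS := fromBlocks_one_zero_mul_mul_eq_of_mul_eq (mul_eq_one_comm.mp hR) heq heq'
  set S := Rᵀ * R'
  have hS : S * Sᵀ = 1 := by
    rw [transpose_mul, transpose_transpose, Matrix.mul_assoc, ← Matrix.mul_assoc R',
      mul_eq_one_comm.mp hR', Matrix.one_mul, hR]
  rw [← fromBlocks_toBlocks S] at hS hUBS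
  obtain ⟨hg, hL, hK, hP, hQ, hAtilde', hρ⟩ :=
    eq_zero_of_fromBlocks_one_zero_mul_fromBlocks_mul_eq_fromBlocks hAtilde hS hUBS
  obtain ⟨ε, hε, hQε⟩ := exists_eq_of_const_of_mul_transpose_eq_one hQ
  have hρ' : ρ' = ε * ρ := by
    rw [hQε, of_const_mul_of_const] at hρ
    simpa [mul_comm] using congrFun (congrFun hρ 0) 0
  refine ⟨?_, S.toBlocks₁₁, ε, mul_eq_one_comm.mp hP, hε, ?_, hAtilde', hρ', ?_⟩
  · funext j
    simpa [sub_eq_zero, eq_comm] using congrFun (congrFun hg 0) j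
  · rw [← hL, ← hK, ← hQε, fromBlocks_toBlocks]
  · rcases hε with rfl | rfl <;> simp [hρ']

/-- Uniqueness part of the weak canonical form (Lemma 3.1): if
`U(g) * A * R = [[Atilde,0],[0,ρ]]` and `U(g') * A * R' = [[Atilde',0],[0,ρ']]`
with `R, R'` orthogonal and `Atilde, Atilde'` invertible, then `g = g'` and
`Rᵀ * R' = [[Rtilde,0],[0,ε]]` for some orthogonal `Rtilde` and sign `ε = ±1`,
with `Atilde' = Atilde * Rtilde` and `ρ' = ε * ρ`; in particular `|ρ'| = |ρ|`. -/
theorem weak_canonical_form_unique (n : ℕ) (hn : 1 ≤ n)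
    (A : Matrix (Fin (2 * n) ⊕ Fin 1) (Fin (2 * n) ⊕ Fin 1) ℝ)
    (hA : LinearIndependent ℝ (fun i : Fin (2 * n) => A (Sum.inl i)))
    (R R' : Matrix (Fin (2 * n) ⊕ Fin 1) (Fin (2 * n) ⊕ Fin 1) ℝ)
    (hR : Rᵀ * R = 1) (hR' : R'ᵀ * R' = 1)
    (g g' : Fin (2 * n) → ℝ)
    (Atilde Atilde' : Matrix (Fin (2 * n)) (Fin (2 * n)) ℝ)
    (hAtilde : IsUnit Atilde) (hAtilde' : IsUnit Atilde')
    (ρ ρ' : ℝ)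
    (heq : (Matrix.fromBlocks 1 0 (Matrix.of fun (_ : Fin 1) j => g j) 1) * A * R
        = Matrix.fromBlocks Atilde 0 0 (Matrix.of fun _ _ => ρ))
    (heq' : (Matrix.fromBlocks 1 0 (Matrix.of fun (_ : Fin 1) j => g' j) 1) * A * R'
        = Matrix.fromBlocks Atilde' 0 0 (Matrix.of fun _ _ => ρ')) :
    g = g' ∧
    ∃ (Rtilde : Matrix (Fin (2 * n)) (Fin (2 * n)) ℝ) (ε : ℝ),
      Rtildeᵀ * Rtilde = 1 ∧ (ε = 1 ∨ ε = -1) ∧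
      Rᵀ * R' = Matrix.fromBlocks Rtilde 0 0 (Matrix.of fun _ _ => ε) ∧
      Atilde' = Atilde * Rtilde ∧ ρ' = ε * ρ ∧ |ρ'| = |ρ| :=
  weak_canonical_form_unique_general n A R R' hR hR' g g' Atilde Atilde' hAtilde ρ ρ' heq heq'
end

section
/- Let n ≥ 1, let d_1, …, d_n be nonzero reals, ρ ∈ ℝ, p_z a nonzero real, and p_{x,1}, …, p_{x,n}, p_{y,1}, …, p_{y,n} ∈ ℝ. Set ξ_i = p_z·d_i, and define for t ∈ ℝ: h_{x,i}(t) = p_{x,i}·cos(ξ_i t) − p_{y,i}·sin(ξ_i t), h_{y,i}(t) = p_{x,i}·sin(ξ_i t) + p_{y,i}·cos(ξ_i t), x_i(t) = (1/ξ_i)·(p_{x,i}·sin(ξ_i t) + p_{y,i}·(cos(ξ_i t) − 1)), y_i(t) = (1/ξ_i)·(p_{x,i}·(1 − cos(ξ_i t)) + p_{y,i}·sin(ξ_i t)), and z(t) = ρ²·p_z·t + (1/2)·∑_{i=1}^{n} (d_i·t/ξ_i − (d_i/ξ_i²)·sin(ξ_i t))·(p_{x,i}² + p_{y,i}²). Then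 x_i(0) = y_i(0) = z(0) = 0, h_{x,i}(0) = p_{x,i}, h_{y,i}(0) = p_{y,i}, and for all t ∈ ℝ: x_i'(t) = h_{x,i}(t), y_i'(t) = h_{y,i}(t), h_{x,i}'(t) = −ξ_i·h_{y,i}(t), h_{y,i}'(t) = ξ_i·h_{x,i}(t), and z'(t) = (1/2)·∑_{i=1}^{n} d_i·(x_i(t)·h_{y,i}(t) − y_i(t)·h_{x,i}(t)) + ρ²·p_z. -/
/-!
Each pair `(x_i, y_i)` is an arc of a circle through the origin, traversed with angular velocity
`ξ_i`, and `(h_{x,i}, h_{y,i})` is its velocity vector, rotating uniformly. All equations except the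
last are then routine differentiations. For `z`, the key identity is that the symplectic area rate
`x_i h_{y,i} - y_i h_{x,i}` equals `(p_{x,i}² + p_{y,i}²)(1 - cos(ξ_i t)) / ξ_i`, which is exactly
the derivative of the `i`-th summand of `z` divided by `d_i`.
-/

open Real

noncomputable section

namespace HeisenbergGeodesic

variable (ξ p q : ℝ)

def momentumX (t : ℝ) : ℝ := p * cos (ξ * t) - q * sin (ξ * t)

def momentumY (t : ℝ) : ℝ := p * sin (ξ * t) + q * cos (ξ * t)

def positionX (t : ℝ) : ℝ := (1 / ξ) * (p * sin (ξ * t) + q * (cos (ξ * t) - 1))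

def positionY (t : ℝ) : ℝ := (1 / ξ) * (p * (1 - cos (ξ * t)) + q * sin (ξ * t))

/-- The `i`-th summand of `z`, with `ξ = p_z d`. -/
def verticalTerm (d : ℝ) (t : ℝ) : ℝ :=
  (d * t / ξ - (d / ξ ^ 2) * sin (ξ * t)) * (p ^ 2 + q ^ 2)

theorem hasDerivAt_sin_mul (t : ℝ) :
    HasDerivAt (fun s => sin (ξ * s)) (cos (ξ * t) * ξ) t :=
  (hasDerivAt_const_mul ξ).sin

theorem hasDerivAt_cos_mul (t : ℝ) :
    HasDerivAt (fun s => cos (ξ * s)) (-sin (ξ * t) * ξ) t :=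
  (hasDerivAt_const_mul ξ).cos

variable {ξ}

theorem hasDerivAt_momentumX (t : ℝ) :
    HasDerivAt (momentumX ξ p q) (-ξ * momentumY ξ p q t) t := by
  refine (((hasDerivAt_cos_mul ξ t).const_mul p).sub
    ((hasDerivAt_sin_mul ξ t).const_mul q)).congr_deriv ?_
  unfold momentumY
  ring

theorem hasDerivAt_momentumY (t : ℝ) :
    HasDerivAt (momentumY ξ p q) (ξ * momentumX ξ p q t) t := by
  refine (((hasDerivAt_sin_mul ξ t).const_mul p).add
    ((hasDerivAt_cos_mul ξ t).const_mul q)).congr_deriv ?_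
  unfold momentumX
  ring

theorem hasDerivAt_positionX (hξ : ξ ≠ 0) (t : ℝ) :
    HasDerivAt (positionX ξ p q) (momentumX ξ p q t) t := by
  refine ((((hasDerivAt_sin_mul ξ t).const_mul p).add
    (((hasDerivAt_cos_mul ξ t).sub_const 1).const_mul q)).const_mul (1 / ξ)).congr_deriv ?_
  unfold momentumX
  field_simp
  ring

theorem hasDerivAt_positionY (hξ : ξ ≠ 0) (t : ℝ) :
    HasDerivAt (positionY ξ p q) (momentumY ξ p q t) t := by
  refine (((((hasDerivAt_cos_mul ξ t).const_sub 1).const_mul p).add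
    ((hasDerivAt_sin_mul ξ t).const_mul q)).const_mul (1 / ξ)).congr_deriv ?_
  unfold momentumY
  field_simp

theorem positionX_mul_momentumY_sub_positionY_mul_momentumX (hξ : ξ ≠ 0) (t : ℝ) :
    positionX ξ p q t * momentumY ξ p q t - positionY ξ p q t * momentumX ξ p q t =
      (p ^ 2 + q ^ 2) * (1 - cos (ξ * t)) / ξ := by
  unfold positionX positionY momentumX momentumY
  field_simp
  linear_combination (p ^ 2 + q ^ 2) * sin_sq_add_cos_sq (ξ * t)

theorem hasDerivAt_verticalTerm (hξ : ξ ≠ 0) (d t : ℝ) :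
    HasDerivAt (verticalTerm ξ p q d)
      (d * (positionX ξ p q t * momentumY ξ p q t - positionY ξ p q t * momentumX ξ p q t)) t := by
  refine ((((hasDerivAt_id' t).const_mul d).div_const ξ).fun_sub
    ((hasDerivAt_sin_mul ξ t).const_mul (d / ξ ^ 2))).mul_const (p ^ 2 + q ^ 2)
    |>.congr_deriv ?_
  rw [positionX_mul_momentumY_sub_positionY_mul_momentumX p q hξ]
  field_simp

end HeisenbergGeodesic

end

open HeisenbergGeodesic in
theorem heisenberg_geodesic_parametrization_general (n : ℕ)
    (d : Fin n → ℝ) (hd : ∀ i, d i ≠ 0)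
    (ρ pz : ℝ) (hpz : pz ≠ 0)
    (px py : Fin n → ℝ)
    (ξ : Fin n → ℝ) (hξ : ∀ i, ξ i = pz * d i)
    (hX hY x y : Fin n → ℝ → ℝ) (z : ℝ → ℝ)
    (hhX : ∀ i t, hX i t = px i * Real.cos (ξ i * t) - py i * Real.sin (ξ i * t))
    (hhY : ∀ i t, hY i t = px i * Real.sin (ξ i * t) + py i * Real.cos (ξ i * t))
    (hx : ∀ i t, x i t =
      (1 / ξ i) * (px i * Real.sin (ξ i * t) + py i * (Real.cos (ξ i * t) - 1)))
    (hy : ∀ i t, y i t =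
      (1 / ξ i) * (px i * (1 - Real.cos (ξ i * t)) + py i * Real.sin (ξ i * t)))
    (hz : ∀ t, z t = ρ ^ 2 * pz * t +
      (1 / 2) * ∑ i, (d i * t / ξ i - (d i / (ξ i) ^ 2) * Real.sin (ξ i * t)) *
        ((px i) ^ 2 + (py i) ^ 2)) :
    (∀ i, x i 0 = 0) ∧ (∀ i, y i 0 = 0) ∧ z 0 = 0 ∧
    (∀ i, hX i 0 = px i) ∧ (∀ i, hY i 0 = py i) ∧
    (∀ i t, HasDerivAt (x i) (hX i t) t) ∧
    (∀ i t, HasDerivAt (y i) (hY i t) t) ∧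
    (∀ i t, HasDerivAt (hX i) (-(ξ i) * hY i t) t) ∧
    (∀ i t, HasDerivAt (hY i) (ξ i * hX i t) t) ∧
    (∀ t, HasDerivAt z
      ((1 / 2) * ∑ i, d i * (x i t * hY i t - y i t * hX i t) + ρ ^ 2 * pz) t) := by
  have hξ₀ (i : Fin n) : ξ i ≠ 0 := hξ i ▸ mul_ne_zero hpz (hd i)
  obtain rfl : hX = fun i => momentumX (ξ i) (px i) (py i) := funext₂ hhX
  obtain rfl : hY = fun i => momentumY (ξ i) (px i) (py i) := funext₂ hhY
  obtain rfl : x = fun i => positionX (ξ i) (px i) (py i) := funext₂ hx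
  obtain rfl : y = fun i => positionY (ξ i) (px i) (py i) := funext₂ hy
  obtain rfl : z = fun t => ρ ^ 2 * pz * t +
      (1 / 2) * ∑ i, verticalTerm (ξ i) (px i) (py i) (d i) t := funext hz
  refine ⟨fun i => by simp [positionX], fun i => by simp [positionY], by simp [verticalTerm],
    fun i => by simp [momentumX], fun i => by simp [momentumY],
    fun i => hasDerivAt_positionX _ _ (hξ₀ i), fun i => hasDerivAt_positionY _ _ (hξ₀ i),
    fun i => hasDerivAt_momentumX _ _, fun i => hasDerivAt_momentumY _ _, fun t => ?_⟩
  have hsum := HasDerivAt.fun_sum (u := Finset.univ)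
    fun i _ => hasDerivAt_verticalTerm (px i) (py i) (hξ₀ i) (d i) t
  exact ((hasDerivAt_const_mul (ρ ^ 2 * pz)).add (hsum.const_mul (1 / 2))).congr_deriv
    (by ring)

/-- Verification of the explicit geodesic parametrization (Lemma 'lemgeod', case
`p_z ≠ 0`): the explicit functions `x_i, y_i, z, h_{x,i}, h_{y,i}` satisfy the
Hamiltonian system of the Heisenberg group with the given initial conditions. -/
theorem heisenberg_geodesic_parametrization (n : ℕ) (hn : 1 ≤ n)
    (d : Fin n → ℝ) (hd : ∀ i, d i ≠ 0)
    (ρ pz : ℝ) (hpz : pz ≠ 0)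
    (px py : Fin n → ℝ)
    (ξ : Fin n → ℝ) (hξ : ∀ i, ξ i = pz * d i)
    (hX hY x y : Fin n → ℝ → ℝ) (z : ℝ → ℝ)
    (hhX : ∀ i t, hX i t = px i * Real.cos (ξ i * t) - py i * Real.sin (ξ i * t))
    (hhY : ∀ i t, hY i t = px i * Real.sin (ξ i * t) + py i * Real.cos (ξ i * t))
    (hx : ∀ i t, x i t =
      (1 / ξ i) * (px i * Real.sin (ξ i * t) + py i * (Real.cos (ξ i * t) - 1)))
    (hy : ∀ i t, y i t =
      (1 / ξ i) * (px i * (1 - Real.cos (ξ i * t)) + py i * Real.sin (ξ i * t)))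
    (hz : ∀ t, z t = ρ ^ 2 * pz * t +
      (1 / 2) * ∑ i, (d i * t / ξ i - (d i / (ξ i) ^ 2) * Real.sin (ξ i * t)) *
        ((px i) ^ 2 + (py i) ^ 2)) :
    (∀ i, x i 0 = 0) ∧ (∀ i, y i 0 = 0) ∧ z 0 = 0 ∧
    (∀ i, hX i 0 = px i) ∧ (∀ i, hY i 0 = py i) ∧
    (∀ i t, HasDerivAt (x i) (hX i t) t) ∧
    (∀ i t, HasDerivAt (y i) (hY i t) t) ∧
    (∀ i t, HasDerivAt (hX i) (-(ξ i) * hY i t) t) ∧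
    (∀ i t, HasDerivAt (hY i) (ξ i * hX i t) t) ∧
    (∀ t, HasDerivAt z
      ((1 / 2) * ∑ i, d i * (x i t * hY i t - y i t * hX i t) + ρ ^ 2 * pz) t) :=
  heisenberg_geodesic_parametrization_general n d hd ρ pz hpz px py ξ hξ hX hY x y z hhX hhY hx hy
    hz
end
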